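/- arXiv:2211.17129 — 2 statements merged into one kernel-verified Lean document; each statement's English description precedes it below -/
import Mathlib

section
/- Let (P_i)_{i≥0} be a sequence where P_i ⊆ ℝ^{p_i} is a p_i-dimensional lattice polytope, and (Q_i)_{i≥0} a sequence where Q_i ⊆ ℝ^{q_i} is a q_i-dimensional lattice polytope. Suppose there exist formal power series f, g ∈ ℤ[[X]] such that for every j ≥ 0 the coefficient of X^j in (1−X)^{p_i+1}·Ehr_{P_i}(X) equals the X^j-coefficient of f for all sufficiently large i, and the coefficient of X^j in (1−X)^{q_i+1}·Ehr_{Q_i}(X) equals the X^j-coefficient of g for all sufficiently large i. Then for every j ≥ 0, the coefficient of X^j in (1−X)^{p_i+q_i+2}·Ehr_{P_i⋆Q_i}(X) equals the X^j-coefficient of the product f·g for all sufficiently large i. -/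
open scoped BigOperators Pointwise

noncomputable def ehrhartSeries {n : ℕ} (P : Set (Fin n → ℝ)) : PowerSeries ℤ :=
  PowerSeries.mk fun t =>
    (Set.ncard {x : Fin n → ℤ | (fun i => (x i : ℝ)) ∈ (t : ℝ) • P} : ℤ)

def IsLatticePolytope {n : ℕ} (P : Set (Fin n → ℝ)) : Prop :=
  ∃ V : Finset (Fin n → ℤ),
    P = convexHull ℝ ((fun v : Fin n → ℤ => fun i => (v i : ℝ)) '' ↑V)

noncomputable def joinPolytope {p q : ℕ} (P : Set (Fin p → ℝ)) (Q : Set (Fin q → ℝ)) :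
    Set (Fin (p + q + 1) → ℝ) :=
  convexHull ℝ
    ((fun x : Fin p → ℝ =>
        Fin.append (Fin.append x (0 : Fin q → ℝ)) (fun _ : Fin 1 => (0 : ℝ))) '' P ∪
     (fun y : Fin q → ℝ =>
        Fin.append (Fin.append (0 : Fin p → ℝ) y) (fun _ : Fin 1 => (1 : ℝ))) '' Q)

/-!
A lattice point of `t • (P ⋆ Q)` with last coordinate `h` is exactly a lattice point of
`(t - h) • P` followed by one of `h • Q`, so `Ehr_{P ⋆ Q} = Ehr_P * Ehr_Q`. As
`(1 - X)^(p + q + 2) = (1 - X)^(p + 1) * (1 - X)^(q + 1)`, the numerator of `P ⋆ Q` is the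
product of the numerators of `P` and `Q`; a coefficient of a product depends on finitely many
coefficients of the factors, all of which are eventually stable.
-/

open Filter Bornology Set Finset

section JoinCoords

variable {α : Type*} {p q : ℕ}

def joinCoords (x : Fin p → α) (y : Fin q → α) (c : α) : Fin (p + q + 1) → α :=
  Fin.append (Fin.append x y) fun _ => c

theorem joinCoords_add [Add α] (x x' : Fin p → α) (y y' : Fin q → α) (c c' : α) :
    joinCoords x y c + joinCoords x' y' c' = joinCoords (x + x') (y + y') (c + c') := by
  ext i
  refine Fin.addCases (fun j => Fin.addCases (fun k => ?_) (fun k => ?_) j) (fun _ => ?_) i <;>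
    simp [joinCoords]

theorem smul_joinCoords {M : Type*} [SMul M α] (a : M) (x : Fin p → α) (y : Fin q → α) (c : α) :
    a • joinCoords x y c = joinCoords (a • x) (a • y) (a • c) := by
  ext i
  refine Fin.addCases (fun j => Fin.addCases (fun k => ?_) (fun k => ?_) j) (fun _ => ?_) i <;>
    simp [joinCoords]

theorem comp_joinCoords {β : Type*} (f : α → β) (x : Fin p → α) (y : Fin q → α) (c : α) :
    f ∘ joinCoords x y c = joinCoords (f ∘ x) (f ∘ y) (f c) := by
  ext i
  refine Fin.addCases (fun j => Fin.addCases (fun k => ?_) (fun k => ?_) j) (fun _ => ?_) i <;>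
    simp [joinCoords]

theorem joinCoords_inj {x x' : Fin p → α} {y y' : Fin q → α} {c c' : α} :
    joinCoords x y c = joinCoords x' y' c' ↔ x = x' ∧ y = y' ∧ c = c' := by
  refine ⟨fun h => ⟨funext fun i => ?_, funext fun i => ?_, ?_⟩,
    fun ⟨hx, hy, hc⟩ => hx ▸ hy ▸ hc ▸ rfl⟩
  · simpa [joinCoords] using congrFun h (Fin.castAdd 1 (Fin.castAdd q i))
  · simpa [joinCoords] using congrFun h (Fin.castAdd 1 (Fin.natAdd p i))
  · simpa [joinCoords] using congrFun h (Fin.natAdd (p + q) 0)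

theorem exists_joinCoords_eq (z : Fin (p + q + 1) → α) : ∃ x y c, joinCoords x y c = z := by
  refine ⟨fun i => z (Fin.castAdd 1 (Fin.castAdd q i)), fun i => z (Fin.castAdd 1 (Fin.natAdd p i)),
    z (Fin.natAdd (p + q) 0), ?_⟩
  ext i
  refine Fin.addCases (fun j => Fin.addCases (fun k => ?_) (fun k => ?_) j) (fun k => ?_) i
  all_goals simp only [joinCoords, Fin.append_left, Fin.append_right]
  rw [Subsingleton.elim k 0]

end JoinCoords

section ConvexJoin

variable {𝕜 E : Type*} [Field 𝕜] [LinearOrder 𝕜] [IsStrictOrderedRing 𝕜] [AddCommGroup E]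
  [Module 𝕜 E]

theorem mem_smul_convexJoin {A B : Set E} {t : 𝕜} (ht : 0 ≤ t) {z : E} :
    z ∈ t • convexJoin 𝕜 A B ↔ ∃ s h : 𝕜, 0 ≤ s ∧ 0 ≤ h ∧ s + h = t ∧ z ∈ s • A + h • B := by
  constructor
  · rintro ⟨_, hw, rfl⟩
    obtain ⟨a, ha, b, hb, u, v, hu, hv, huv, rfl⟩ := mem_convexJoin.1 hw
    refine ⟨t * u, t * v, mul_nonneg ht hu, mul_nonneg ht hv, by rw [← mul_add, huv, mul_one], ?_⟩
    dsimp only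
    rw [smul_add, smul_smul, smul_smul]
    exact add_mem_add (smul_mem_smul_set ha) (smul_mem_smul_set hb)
  · rintro ⟨s, h, hs, hh, rfl, _, ⟨a, ha, rfl⟩, _, ⟨b, hb, rfl⟩, rfl⟩
    have hab : (convexJoin 𝕜 A B).Nonempty := ⟨a, subset_convexJoin_left ⟨b, hb⟩ ha⟩
    rcases (add_nonneg hs hh).eq_or_lt with hst | hst
    · obtain ⟨rfl, rfl⟩ : s = 0 ∧ h = 0 := ⟨by linarith, by linarith⟩
      rw [← hst, zero_smul_set hab]
      simp
    · refine ⟨(s / (s + h)) • a + (h / (s + h)) • b,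
        mem_convexJoin.2 ⟨a, ha, b, hb, ⟨_, _, by positivity, by positivity, ?_, rfl⟩⟩, ?_⟩
      · rw [← add_div, div_self hst.ne']
      · dsimp only
        rw [smul_add, smul_smul, smul_smul, mul_div_cancel₀ _ hst.ne', mul_div_cancel₀ _ hst.ne']

end ConvexJoin

def latticePoints {n : ℕ} (S : Set (Fin n → ℝ)) : Set (Fin n → ℤ) :=
  {x | (fun i => (x i : ℝ)) ∈ S}

theorem coeff_ehrhartSeries {n : ℕ} (P : Set (Fin n → ℝ)) (t : ℕ) :
    PowerSeries.coeff t (ehrhartSeries P) = (latticePoints ((t : ℝ) • P)).ncard := by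
  rw [ehrhartSeries, PowerSeries.coeff_mk]
  rfl

theorem Bornology.IsBounded.finite_latticePoints {n : ℕ} {S : Set (Fin n → ℝ)}
    (hS : IsBounded S) : (latticePoints S).Finite := by
  have h := Tendsto.pi_map_coprodᵢ fun _ : Fin n => Int.tendsto_coe_cofinite
  rw [coprodᵢ_cofinite, coprodᵢ_cocompact] at h
  exact (eventually_cofinite.1 (h hS.isCompact_closure.compl_mem_cocompact)).subset
    fun x hx => not_not_intro (subset_closure hx)

section Join

variable {p q : ℕ} {P : Set (Fin p → ℝ)} {Q : Set (Fin q → ℝ)}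

theorem Convex.image_joinCoords_left {S : Set (Fin p → ℝ)} (hS : Convex ℝ S) (y : Fin q → ℝ)
    (c : ℝ) : Convex ℝ ((fun x => joinCoords x y c) '' S) := by
  rintro _ ⟨x, hx, rfl⟩ _ ⟨x', hx', rfl⟩ a b ha hb hab
  refine ⟨a • x + b • x', hS hx hx' ha hb hab, ?_⟩
  simp only [smul_joinCoords, joinCoords_add, ← add_smul, hab, one_smul]

theorem Convex.image_joinCoords_right {S : Set (Fin q → ℝ)} (hS : Convex ℝ S) (x : Fin p → ℝ)
    (c : ℝ) : Convex ℝ ((fun y => joinCoords x y c) '' S) := by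
  rintro _ ⟨y, hy, rfl⟩ _ ⟨y', hy', rfl⟩ a b ha hb hab
  refine ⟨a • y + b • y', hS hy hy' ha hb hab, ?_⟩
  simp only [smul_joinCoords, joinCoords_add, ← add_smul, hab, one_smul]

theorem joinPolytope_eq_convexJoin (hPc : Convex ℝ P) (hQc : Convex ℝ Q) (hPne : P.Nonempty)
    (hQne : Q.Nonempty) :
    joinPolytope P Q =
      convexJoin ℝ ((fun x => joinCoords x 0 0) '' P) ((fun y => joinCoords 0 y 1) '' Q) := by
  change convexHull ℝ ((fun x => joinCoords x 0 0) '' P ∪ (fun y => joinCoords 0 y 1) '' Q) = _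
  rw [convexHull_union (hPne.image _) (hQne.image _),
    (hPc.image_joinCoords_left 0 0).convexHull_eq, (hQc.image_joinCoords_right 0 1).convexHull_eq]

theorem joinCoords_mem_smul_joinPolytope_iff (hPc : Convex ℝ P) (hQc : Convex ℝ Q)
    (hPne : P.Nonempty) (hQne : Q.Nonempty) {t : ℝ} (ht : 0 ≤ t) (x : Fin p → ℝ)
    (y : Fin q → ℝ) (c : ℝ) :
    joinCoords x y c ∈ t • joinPolytope P Q ↔ 0 ≤ c ∧ c ≤ t ∧ x ∈ (t - c) • P ∧ y ∈ c • Q := by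
  have hcomb (s h : ℝ) (a : Fin p → ℝ) (b : Fin q → ℝ) :
      s • joinCoords a 0 0 + h • joinCoords 0 b 1 = joinCoords (s • a) (h • b) h := by
    simp [smul_joinCoords, joinCoords_add]
  rw [joinPolytope_eq_convexJoin hPc hQc hPne hQne, mem_smul_convexJoin ht]
  constructor
  · rintro ⟨s, h, hs, hh, rfl, _, ⟨_, ⟨a, ha, rfl⟩, rfl⟩, _, ⟨_, ⟨b, hb, rfl⟩, rfl⟩, he⟩
    obtain ⟨rfl, rfl, rfl⟩ := joinCoords_inj.1 ((hcomb s h a b).symm.trans he)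
    exact ⟨hh, by linarith, by simpa using smul_mem_smul_set ha, smul_mem_smul_set hb⟩
  · rintro ⟨hc, hct, ⟨a, ha, rfl⟩, ⟨b, hb, rfl⟩⟩
    exact ⟨t - c, c, by linarith, hc, by ring, _, smul_mem_smul_set (mem_image_of_mem _ ha), _,
      smul_mem_smul_set (mem_image_of_mem _ hb), hcomb _ _ a b⟩

def joinSlice (P : Set (Fin p → ℝ)) (Q : Set (Fin q → ℝ)) (s h : ℕ) :
    Set (Fin (p + q + 1) → ℤ) :=
  (fun ab : (Fin p → ℤ) × (Fin q → ℤ) => joinCoords ab.1 ab.2 (h : ℤ)) ''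
    (latticePoints ((s : ℝ) • P) ×ˢ latticePoints ((h : ℝ) • Q))

theorem latticePoints_smul_joinPolytope (hPc : Convex ℝ P) (hQc : Convex ℝ Q)
    (hPne : P.Nonempty) (hQne : Q.Nonempty) (t : ℕ) :
    latticePoints ((t : ℝ) • joinPolytope P Q) =
      ⋃ sh ∈ (antidiagonal t : Set (ℕ × ℕ)), joinSlice P Q sh.1 sh.2 := by
  ext z
  obtain ⟨a, b, c, rfl⟩ := exists_joinCoords_eq z
  have hcast : (fun i => ((joinCoords a b c i : ℤ) : ℝ)) =
      joinCoords (fun i => (a i : ℝ)) (fun i => (b i : ℝ)) (c : ℝ) :=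
    comp_joinCoords Int.cast a b c
  simp only [joinSlice, latticePoints, Set.mem_ofPred_eq, hcast,
    joinCoords_mem_smul_joinPolytope_iff hPc hQc hPne hQne (Nat.cast_nonneg t), mem_iUnion,
    mem_image, mem_prod, Prod.exists, joinCoords_inj, Finset.mem_coe,
    Finset.HasAntidiagonal.mem_antidiagonal]
  constructor
  · rintro ⟨hc, hct, ha, hb⟩
    lift c to ℕ using (by exact_mod_cast hc)
    have hct : c ≤ t := by exact_mod_cast hct
    refine ⟨t - c, c, Nat.sub_add_cancel hct, a, b, ⟨?_, hb⟩, rfl, rfl, rfl⟩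
    simpa [Nat.cast_sub hct] using ha
  · rintro ⟨s, h, rfl, a, b, ⟨ha, hb⟩, rfl, rfl, rfl⟩
    refine ⟨by positivity, by simp, by simpa using ha, by simpa using hb⟩

theorem finite_joinSlice (hPb : IsBounded P) (hQb : IsBounded Q) (s h : ℕ) :
    (joinSlice P Q s h).Finite :=
  (((hPb.smul₀ _).finite_latticePoints).prod (hQb.smul₀ _).finite_latticePoints).image _

theorem ncard_joinSlice (s h : ℕ) :
    (joinSlice P Q s h).ncard =
      (latticePoints ((s : ℝ) • P)).ncard * (latticePoints ((h : ℝ) • Q)).ncard := by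
  rw [joinSlice, Set.ncard_image_of_injective _ fun ab ab' he => ?_, Set.ncard_prod]
  obtain ⟨ha, hb, -⟩ := joinCoords_inj.1 he
  exact Prod.ext ha hb

theorem pairwiseDisjoint_joinSlice (t : ℕ) :
    (antidiagonal t : Set (ℕ × ℕ)).PairwiseDisjoint fun sh => joinSlice P Q sh.1 sh.2 := by
  rintro ⟨s, h⟩ hsh ⟨s', h'⟩ hsh' hne
  refine Set.disjoint_left.2 ?_
  rintro _ ⟨ab, -, rfl⟩ ⟨ab', -, he⟩
  obtain ⟨-, -, hh⟩ := joinCoords_inj.1 he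
  simp only [Finset.mem_coe, Finset.HasAntidiagonal.mem_antidiagonal] at hsh hsh'
  exact hne (Prod.ext (by omega) (by omega))

theorem ehrhartSeries_joinPolytope (hPc : Convex ℝ P) (hQc : Convex ℝ Q) (hPb : IsBounded P)
    (hQb : IsBounded Q) (hPne : P.Nonempty) (hQne : Q.Nonempty) :
    ehrhartSeries (joinPolytope P Q) = ehrhartSeries P * ehrhartSeries Q := by
  ext t
  rw [coeff_ehrhartSeries, latticePoints_smul_joinPolytope hPc hQc hPne hQne,
    Set.Finite.ncard_biUnion (Finset.finite_toSet _)
      (fun sh _ => finite_joinSlice hPb hQb sh.1 sh.2) (pairwiseDisjoint_joinSlice t),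
    finsum_mem_coe_finset, PowerSeries.coeff_mul, Nat.cast_sum]
  simp only [ncard_joinSlice, coeff_ehrhartSeries, Nat.cast_mul]

end Join

theorem PowerSeries.eventually_coeff_mul_eq {R ι : Type*} [Semiring R] {l : Filter ι}
    {a b : ι → PowerSeries R} {f g : PowerSeries R}
    (ha : ∀ j, ∀ᶠ i in l, coeff j (a i) = coeff j f)
    (hb : ∀ j, ∀ᶠ i in l, coeff j (b i) = coeff j g) (j : ℕ) :
    ∀ᶠ i in l, coeff j (a i * b i) = coeff j (f * g) := by
  filter_upwards [(eventually_all_finset (antidiagonal j)).2 fun sh _ => (ha sh.1).and (hb sh.2)]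
    with i hi
  simp only [coeff_mul]
  exact Finset.sum_congr rfl fun sh hsh => by rw [(hi sh hsh).1, (hi sh hsh).2]

theorem IsLatticePolytope.convex {n : ℕ} {P : Set (Fin n → ℝ)} (hP : IsLatticePolytope P) :
    Convex ℝ P := by
  obtain ⟨V, rfl⟩ := hP
  exact convex_convexHull ℝ _

theorem IsLatticePolytope.isBounded {n : ℕ} {P : Set (Fin n → ℝ)} (hP : IsLatticePolytope P) :
    IsBounded P := by
  obtain ⟨V, rfl⟩ := hP
  exact isBounded_convexHull.2 (V.finite_toSet.image _).isBounded

theorem stmt2 (p q : ℕ → ℕ)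
    (P : ∀ i : ℕ, Set (Fin (p i) → ℝ)) (Q : ∀ i : ℕ, Set (Fin (q i) → ℝ))
    (hP : ∀ i, IsLatticePolytope (P i) ∧ affineSpan ℝ (P i) = ⊤)
    (hQ : ∀ i, IsLatticePolytope (Q i) ∧ affineSpan ℝ (Q i) = ⊤)
    (f g : PowerSeries ℤ)
    (hf : ∀ j : ℕ, ∃ N : ℕ, ∀ i : ℕ, N ≤ i →
      PowerSeries.coeff (R := ℤ) j
        ((1 - PowerSeries.X) ^ (p i + 1) * ehrhartSeries (P i)) = PowerSeries.coeff (R := ℤ) j f)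
    (hg : ∀ j : ℕ, ∃ N : ℕ, ∀ i : ℕ, N ≤ i →
      PowerSeries.coeff (R := ℤ) j
        ((1 - PowerSeries.X) ^ (q i + 1) * ehrhartSeries (Q i)) = PowerSeries.coeff (R := ℤ) j g) :
    ∀ j : ℕ, ∃ N : ℕ, ∀ i : ℕ, N ≤ i →
      PowerSeries.coeff (R := ℤ) j
        ((1 - PowerSeries.X) ^ (p i + q i + 2) * ehrhartSeries (joinPolytope (P i) (Q i))) =
        PowerSeries.coeff (R := ℤ) j (f * g) := by
  have hjoin (i : ℕ) :
      (1 - PowerSeries.X) ^ (p i + q i + 2) * ehrhartSeries (joinPolytope (P i) (Q i)) =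
        ((1 - PowerSeries.X) ^ (p i + 1) * ehrhartSeries (P i)) *
          ((1 - PowerSeries.X) ^ (q i + 1) * ehrhartSeries (Q i)) := by
    obtain ⟨⟨hPl, hPs⟩, ⟨hQl, hQs⟩⟩ := And.intro (hP i) (hQ i)
    rw [ehrhartSeries_joinPolytope hPl.convex hQl.convex hPl.isBounded hQl.isBounded
      (AffineSubspace.nonempty_of_affineSpan_eq_top ℝ _ _ hPs)
      (AffineSubspace.nonempty_of_affineSpan_eq_top ℝ _ _ hQs)]
    ring
  intro j
  simp only [hjoin]
  exact eventually_atTop.1 <| PowerSeries.eventually_coeff_mul_eq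
    (fun k => eventually_atTop.2 (hf k)) (fun k => eventually_atTop.2 (hg k)) j
end

section
/- Fix an integer n ≥ 2, set d := 2n+2, and let q(n) := (1, 1, …, 1, 3n, 10n, 15n) ∈ ℤ^d (with 2n−1 entries equal to 1). Let Δ := conv{e_1, …, e_d, −q(n)} ⊆ ℝ^d. Then, as formal power series in ℤ[[X]], (1−X)^{d+1}·Ehr_Δ(X) = (1 + X² + X⁴ + ⋯ + X^{2n−2})·(1 + 7X + 14X² + 7X³ + X⁴). -/
open scoped BigOperators Pointwise

/-- The vector `q(n) = (1,…,1,3n,10n,15n) ∈ ℤ^{2n+2}` with `2n-1` ones. -/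
def qvec (n : ℕ) : Fin (2 * n + 2) → ℤ := fun i =>
  if (i : ℕ) < 2 * n - 1 then 1
  else if (i : ℕ) = 2 * n - 1 then 3 * n
  else if (i : ℕ) = 2 * n then 10 * n
  else 15 * n

/-- The simplex `Δ_{(1,q(n))} = conv{e_1, …, e_d, -q(n)} ⊆ ℝ^{2n+2}`. -/
noncomputable def deltaQ (n : ℕ) : Set (Fin (2 * n + 2) → ℝ) :=
  convexHull ℝ
    ((Set.range fun i : Fin (2 * n + 2) => fun j : Fin (2 * n + 2) =>
        if j = i then (1 : ℝ) else 0) ∪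
      {fun i => -(qvec n i : ℝ)})

/-!
By barycentric coordinates, `x ∈ t • Δ_{(1,q)}` iff `∑ xᵢ ≤ t` and `N xⱼ + (t - ∑ xᵢ) qⱼ ≥ 0`
for all `j`, where `N = 1 + ∑ qᵢ`. A lattice point `x` is therefore encoded by `B = t - ∑ xᵢ ∈ ℕ`
and `aⱼ = xⱼ + ⌊B qⱼ / N⌋ ∈ ℕ`, subject to `w(B) + ∑ aⱼ = t` with `w(B) = B - ∑ ⌊B qⱼ / N⌋`.
So `Ehr = (∑_B X^{w(B)}) / (1 - X)^d`, and as `w(B + N) = w(B) + 1` the first factor is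
`(∑_{b < N} X^{w(b)}) / (1 - X)`. For `q(n)` we have `N = 30n` and `w(30j + b) = 2j + w(b)` for
`j < n`, `b < 30`, and the thirty values `w(b)`, `b < 30`, give `1 + 7X + 14X² + 7X³ + X⁴`.
-/

open PowerSeries
open Finset hiding mk

noncomputable def countingSeries {α : Type*} (w : α → ℕ) : PowerSeries ℤ :=
  mk fun t => ({x | w x = t}.ncard : ℤ)

section countingSeries

variable {α β : Type*}

lemma coeff_countingSeries (w : α → ℕ) (t : ℕ) :
    coeff t (countingSeries w) = ({x | w x = t}.ncard : ℤ) :=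
  coeff_mk _ _

lemma countingSeries_comp_equiv (w : α → ℕ) (e : β ≃ α) :
    countingSeries (w ∘ e) = countingSeries w := by
  ext t
  simp only [coeff_countingSeries]
  rw [← Set.ncard_preimage_of_injective_subset_range e.injective (by simp [e.surjective.range_eq])]
  rfl

lemma countingSeries_of_fintype [Fintype α] (w : α → ℕ) :
    countingSeries w = ∑ x, X ^ w x := by
  classical
  ext t
  simp only [coeff_countingSeries, map_sum, coeff_X_pow, sum_boole]
  rw [← Set.ncard_coe_finset]
  congr 2
  ext x
  simp [eq_comm]

lemma countingSeries_id : countingSeries (id : ℕ → ℕ) = mk 1 := by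
  ext t
  simp [coeff_countingSeries]

lemma countingSeries_add {w₁ : α → ℕ} {w₂ : β → ℕ} (h₁ : ∀ t, {x | w₁ x = t}.Finite)
    (h₂ : ∀ t, {y | w₂ y = t}.Finite) :
    countingSeries (fun p : α × β => w₁ p.1 + w₂ p.2) = countingSeries w₁ * countingSeries w₂ := by
  classical
  ext t
  have hfiber : {p : α × β | w₁ p.1 + w₂ p.2 = t} =
      ↑((antidiagonal t).biUnion fun uv => (h₁ uv.1).toFinset ×ˢ (h₂ uv.2).toFinset) := by
    ext p
    simp
  rw [coeff_countingSeries, coeff_mul, hfiber, Set.ncard_coe_finset, card_biUnion]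
  · push_cast
    refine sum_congr rfl fun uv _ => ?_
    rw [card_product, coeff_countingSeries, coeff_countingSeries,
      Set.ncard_eq_toFinset_card _ (h₁ _), Set.ncard_eq_toFinset_card _ (h₂ _)]
    push_cast
    rfl
  · intro uv _ uv' _ hne
    simp only [Function.onFun, disjoint_left, mem_product, Set.Finite.mem_toFinset,
      Set.mem_ofPred_eq]
    rintro p ⟨h₁, h₂⟩ ⟨h₁', h₂'⟩
    exact hne (Prod.ext (h₁.symm.trans h₁') (h₂.symm.trans h₂'))

lemma finite_setOf_sum_eq (d t : ℕ) : {a : Fin d → ℕ | ∑ i, a i = t}.Finite :=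
  (Finset.Nat.antidiagonalTuple d t).finite_toSet.subset fun _ ha =>
    Finset.Nat.mem_antidiagonalTuple.2 ha

lemma countingSeries_sum (d : ℕ) :
    countingSeries (fun a : Fin d → ℕ => ∑ i, a i) = mk 1 ^ d := by
  induction d with
  | zero =>
    ext t
    cases t <;> simp [coeff_countingSeries, coeff_one]
  | succ d ih =>
    have hcons : (fun a : Fin (d + 1) → ℕ => ∑ i, a i) ∘ Fin.consEquiv (fun _ => ℕ) =
        fun p : ℕ × (Fin d → ℕ) => id p.1 + ∑ i, p.2 i := by
      ext p
      simp [Fin.sum_univ_succ, Fin.consEquiv]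
    rw [← countingSeries_comp_equiv _ (Fin.consEquiv fun _ => ℕ), hcons,
      countingSeries_add (by simp) (finite_setOf_sum_eq d), countingSeries_id, ih, pow_succ']

end countingSeries

def normalizedVolume {d : ℕ} (q : Fin d → ℕ) : ℕ := ∑ i, q i + 1

def hstarWeight {d : ℕ} (q : Fin d → ℕ) (b : ℕ) : ℕ :=
  b - ∑ i, b * q i / normalizedVolume q

instance {d : ℕ} (q : Fin d → ℕ) : NeZero (normalizedVolume q) := ⟨Nat.succ_ne_zero _⟩

section hstarWeight

variable {d : ℕ} (q : Fin d → ℕ)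

lemma sum_mul_div_normalizedVolume_le (b : ℕ) : ∑ i, b * q i / normalizedVolume q ≤ b := by
  have hN : 0 < normalizedVolume q := NeZero.pos _
  refine le_of_mul_le_mul_left ?_ hN
  calc normalizedVolume q * ∑ i, b * q i / normalizedVolume q
      ≤ ∑ i, b * q i := by
        rw [mul_sum]
        exact sum_le_sum fun i _ => Nat.mul_div_le _ _
    _ ≤ normalizedVolume q * b := by
        rw [← mul_sum, mul_comm, normalizedVolume]
        exact Nat.mul_le_mul_right _ (Nat.le_succ _)

lemma hstarWeight_add_sum (b : ℕ) :
    hstarWeight q b + ∑ i, b * q i / normalizedVolume q = b :=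
  Nat.sub_add_cancel (sum_mul_div_normalizedVolume_le q b)

lemma hstarWeight_mul_add (k b : ℕ) :
    hstarWeight q (k * normalizedVolume q + b) = k + hstarWeight q b := by
  have hN : 0 < normalizedVolume q := NeZero.pos _
  have hsum : ∑ i, (k * normalizedVolume q + b) * q i / normalizedVolume q =
      k * ∑ i, q i + ∑ i, b * q i / normalizedVolume q := by
    rw [mul_sum, ← sum_add_distrib]
    refine sum_congr rfl fun i _ => ?_
    rw [add_mul, mul_right_comm, add_comm, Nat.add_mul_div_right _ _ hN, add_comm]
  have h := hstarWeight_add_sum q b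
  have h' := hstarWeight_add_sum q (k * normalizedVolume q + b)
  have hkN : k * normalizedVolume q = k * ∑ i, q i + k := mul_add_one _ _
  rw [hsum] at h'
  omega

lemma finite_setOf_hstarWeight_eq (t : ℕ) : {b | hstarWeight q b = t}.Finite := by
  have hN : 0 < normalizedVolume q := NeZero.pos _
  refine (Set.finite_Iio (normalizedVolume q * (t + 1))).subset fun b hb => ?_
  have h := hstarWeight_mul_add q (b / normalizedVolume q) (b % normalizedVolume q)
  rw [Nat.div_add_mod'] at h
  have hlt : b / normalizedVolume q < t + 1 := by
    rw [Set.mem_ofPred_eq] at hb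
    omega
  rw [Set.mem_Iio, mul_comm]
  exact (Nat.div_lt_iff_lt_mul hN).1 hlt

lemma countingSeries_hstarWeight :
    countingSeries (hstarWeight q) =
      mk 1 * ∑ b ∈ range (normalizedVolume q), X ^ hstarWeight q b := by
  have hdivMod : hstarWeight q ∘ (Nat.divModEquiv (normalizedVolume q)).symm =
      fun p => id p.1 + (hstarWeight q ∘ Fin.val) p.2 := by
    ext p
    exact hstarWeight_mul_add q p.1 p.2
  rw [← countingSeries_comp_equiv _ (Nat.divModEquiv (normalizedVolume q)).symm, hdivMod,
    countingSeries_add (by simp) (fun _ => Set.toFinite _), countingSeries_id,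
    countingSeries_of_fintype]
  simp only [Function.comp_apply]
  rw [Fin.sum_univ_eq_sum_range (fun b => X ^ hstarWeight q b)]

end hstarWeight

noncomputable def deltaOneQ {d : ℕ} (q : Fin d → ℕ) : Set (Fin d → ℝ) :=
  convexHull ℝ
    ((Set.range fun i : Fin d => fun j : Fin d => if j = i then (1 : ℝ) else 0) ∪
      {fun i => -(q i : ℝ)})

section deltaOneQ

variable {d : ℕ} (q : Fin d → ℕ)

lemma sum_natCast_eq_normalizedVolume_sub_one : ∑ i, (q i : ℝ) = normalizedVolume q - 1 := by
  simp [normalizedVolume]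

lemma convex_setOf_barycentric_nonneg :
    Convex ℝ {y : Fin d → ℝ | ∑ i, y i ≤ 1 ∧
      ∀ j, 0 ≤ (normalizedVolume q : ℝ) * y j + (1 - ∑ i, y i) * q j} := by
  rintro y ⟨hy, hyj⟩ z ⟨hz, hzj⟩ a b ha hb hab
  simp only [Set.mem_ofPred_eq, Pi.add_apply, Pi.smul_apply, smul_eq_mul, sum_add_distrib,
    ← mul_sum]
  refine ⟨by nlinarith, fun j => ?_⟩
  have key : (normalizedVolume q : ℝ) * (a * y j + b * z j) +
      (1 - (a * ∑ i, y i + b * ∑ i, z i)) * q j =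
      a * ((normalizedVolume q : ℝ) * y j + (1 - ∑ i, y i) * q j) +
        b * ((normalizedVolume q : ℝ) * z j + (1 - ∑ i, z i) * q j) := by
    linear_combination (-(q j : ℝ)) * hab
  rw [key]
  exact add_nonneg (mul_nonneg ha (hyj j)) (mul_nonneg hb (hzj j))

lemma mem_deltaOneQ_iff (y : Fin d → ℝ) :
    y ∈ deltaOneQ q ↔ ∑ i, y i ≤ 1 ∧
      ∀ j, 0 ≤ (normalizedVolume q : ℝ) * y j + (1 - ∑ i, y i) * q j := by
  have hN : (0 : ℝ) < normalizedVolume q := by exact_mod_cast NeZero.pos _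
  constructor
  · refine fun hy => convexHull_min ?_ (convex_setOf_barycentric_nonneg q) hy
    rintro _ (⟨i, rfl⟩ | rfl)
    · simp only [Set.mem_ofPred_eq, sum_ite_eq', mem_univ, if_true, sub_self, zero_mul, add_zero]
      refine ⟨le_rfl, fun j => ?_⟩
      split_ifs <;> positivity
    · simp only [Set.mem_ofPred_eq, sum_neg_distrib, sum_natCast_eq_normalizedVolume_sub_one]
      refine ⟨by linarith, fun j => le_of_eq (by ring)⟩
  · rintro ⟨hy, hyj⟩
    set N : ℝ := ((normalizedVolume q : ℕ) : ℝ)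
    refine mem_convexHull_of_exists_fintype
      (fun o => Option.elim o ((1 - ∑ i, y i) / N) fun j => (N * y j + (1 - ∑ i, y i) * q j) / N)
      (fun o => Option.elim o (fun i => -(q i : ℝ)) fun i j => if j = i then 1 else 0)
      ?_ ?_ ?_ ?_
    · rintro (_ | j)
      · exact div_nonneg (by linarith) hN.le
      · exact div_nonneg (hyj j) hN.le
    · rw [Fintype.sum_option]
      simp only [Option.elim, ← sum_div, sum_add_distrib, ← mul_sum,
        sum_natCast_eq_normalizedVolume_sub_one]
      field_simp
      ring
    · rintro (_ | i)
      · exact Set.mem_union_right _ rfl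
      · exact Set.mem_union_left _ ⟨i, rfl⟩
    · ext j
      simp only [Fintype.sum_option, Option.elim, Finset.sum_apply, Pi.smul_apply,
        smul_eq_mul, mul_ite, mul_one, mul_zero, sum_ite_eq, mem_univ, if_true]
      field_simp
      ring

lemma eq_zero_of_sum_nonpos_of_barycentric_nonneg {y : Fin d → ℝ}
    (h : ∑ i, y i ≤ 0 ∧ ∀ j, 0 ≤ (normalizedVolume q : ℝ) * y j + (0 - ∑ i, y i) * q j) :
    y = 0 := by
  obtain ⟨hy, hyj⟩ := h
  have hN : (0 : ℝ) < normalizedVolume q := by exact_mod_cast NeZero.pos _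
  have hsum : 0 ≤ ∑ i, y i := by
    have := sum_nonneg fun j (_ : j ∈ univ) => hyj j
    rw [sum_add_distrib, ← mul_sum, ← mul_sum, sum_natCast_eq_normalizedVolume_sub_one] at this
    linarith
  have hyj' : ∀ j, 0 ≤ y j := fun j => by
    have := hyj j
    rw [le_antisymm hy hsum, sub_zero, zero_mul, add_zero] at this
    exact nonneg_of_mul_nonneg_right this hN
  ext j
  exact (sum_eq_zero_iff_of_nonneg fun i _ => hyj' i).1 (le_antisymm hy hsum) j (mem_univ j)

lemma mem_smul_deltaOneQ_iff {t : ℝ} (ht : 0 ≤ t) (y : Fin d → ℝ) :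
    y ∈ t • deltaOneQ q ↔ ∑ i, y i ≤ t ∧
      ∀ j, 0 ≤ (normalizedVolume q : ℝ) * y j + (t - ∑ i, y i) * q j := by
  rcases ht.eq_or_lt with rfl | ht
  · have hne : (deltaOneQ q).Nonempty := ⟨_, subset_convexHull ℝ _ (Set.mem_union_right _ rfl)⟩
    rw [Set.zero_smul_set hne, Set.mem_zero]
    exact ⟨by rintro rfl; simp, eq_zero_of_sum_nonpos_of_barycentric_nonneg q⟩
  · rw [Set.mem_smul_set_iff_inv_smul_mem₀ ht.ne', mem_deltaOneQ_iff]
    simp only [Pi.smul_apply, smul_eq_mul, ← mul_sum]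
    have key : ∀ j, (normalizedVolume q : ℝ) * (t⁻¹ * y j) + (1 - t⁻¹ * ∑ i, y i) * q j =
        t⁻¹ * ((normalizedVolume q : ℝ) * y j + (t - ∑ i, y i) * q j) := fun j => by
      field_simp
    simp only [key, inv_mul_le_iff₀ ht, mul_one, mul_nonneg_iff_of_pos_left (inv_pos.2 ht)]

end deltaOneQ

lemma nonneg_add_natCast_div_iff {N : ℕ} (hN : 0 < N) (x : ℤ) (m : ℕ) :
    0 ≤ x + (m / N : ℕ) ↔ 0 ≤ N * x + m := by
  rw [Int.natCast_div, ← neg_le_iff_add_nonneg', Int.le_ediv_iff_mul_le (by exact_mod_cast hN)]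
  constructor <;> intro h <;> linarith

section latticePoints

variable {d : ℕ} (q : Fin d → ℕ)

lemma intCast_mem_smul_deltaOneQ_iff (t : ℕ) (x : Fin d → ℤ) :
    (fun i => (x i : ℝ)) ∈ (t : ℝ) • deltaOneQ q ↔ ∑ i, x i ≤ t ∧
      ∀ j, 0 ≤ (normalizedVolume q : ℤ) * x j + (t - ∑ i, x i) * q j := by
  rw [mem_smul_deltaOneQ_iff q t.cast_nonneg]
  constructor <;> rintro ⟨h, hj⟩ <;> exact ⟨by exact_mod_cast h, fun j => by exact_mod_cast hj j⟩

def toLatticePoint (p : ℕ × (Fin d → ℕ)) : Fin d → ℤ :=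
  fun j => p.2 j - (p.1 * q j / normalizedVolume q : ℕ)

lemma sum_toLatticePoint_add (p : ℕ × (Fin d → ℕ)) :
    ∑ j, toLatticePoint q p j + p.1 = ∑ j, (p.2 j : ℤ) + hstarWeight q p.1 := by
  have h := congrArg (Nat.cast : ℕ → ℤ) (hstarWeight_add_sum q p.1)
  rw [Nat.cast_add, Nat.cast_sum] at h
  simp only [toLatticePoint, sum_sub_distrib]
  linarith

lemma sub_sum_toLatticePoint {t : ℕ} {p : ℕ × (Fin d → ℕ)}
    (hp : hstarWeight q p.1 + ∑ i, p.2 i = t) : (t : ℤ) - ∑ i, toLatticePoint q p i = p.1 := by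
  have h := sum_toLatticePoint_add q p
  have hp' := congrArg (Nat.cast : ℕ → ℤ) hp
  rw [Nat.cast_add, Nat.cast_sum] at hp'
  linarith

lemma exists_toLatticePoint_eq {t : ℕ} {x : Fin d → ℤ} (hx : ∑ i, x i ≤ t)
    (hxj : ∀ j, 0 ≤ (normalizedVolume q : ℤ) * x j + (t - ∑ i, x i) * q j) :
    ∃ p : ℕ × (Fin d → ℕ), hstarWeight q p.1 + ∑ i, p.2 i = t ∧ toLatticePoint q p = x := by
  obtain ⟨B, hB⟩ : ∃ B : ℕ, (B : ℤ) = t - ∑ i, x i := ⟨_, Int.toNat_of_nonneg (by linarith)⟩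
  set a : Fin d → ℕ := fun j => (x j + (B * q j / normalizedVolume q : ℕ)).toNat
  have ha : ∀ j, (a j : ℤ) = x j + (B * q j / normalizedVolume q : ℕ) := fun j => by
    refine Int.toNat_of_nonneg ((nonneg_add_natCast_div_iff (NeZero.pos (normalizedVolume q))
      _ _).2 ?_)
    push_cast
    rw [hB]
    exact hxj j
  have hlat : toLatticePoint q (B, a) = x := by
    ext j
    simp only [toLatticePoint, ha, add_sub_cancel_right]
  refine ⟨(B, a), ?_, hlat⟩
  have h := sum_toLatticePoint_add q (B, a)
  rw [hlat] at h
  have : ((hstarWeight q B + ∑ i, a i : ℕ) : ℤ) = t := by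
    rw [Nat.cast_add, Nat.cast_sum]
    linarith
  exact_mod_cast this

lemma latticePoints_smul_deltaOneQ_eq_image (t : ℕ) :
    {x : Fin d → ℤ | (fun i => (x i : ℝ)) ∈ (t : ℝ) • deltaOneQ q} =
      toLatticePoint q '' {p | hstarWeight q p.1 + ∑ i, p.2 i = t} := by
  ext x
  simp only [Set.mem_ofPred_eq, intCast_mem_smul_deltaOneQ_iff, Set.mem_image]
  constructor
  · rintro ⟨hx, hxj⟩
    exact exists_toLatticePoint_eq q hx hxj
  · rintro ⟨⟨B, a⟩, hp, rfl⟩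
    have hB := sub_sum_toLatticePoint q hp
    refine ⟨by linarith, fun j => ?_⟩
    have hj := (nonneg_add_natCast_div_iff (NeZero.pos (normalizedVolume q))
      (toLatticePoint q (B, a) j) (B * q j)).1
      (by simp only [toLatticePoint, sub_add_cancel]; positivity)
    rw [hB]
    exact_mod_cast hj

lemma injOn_toLatticePoint (t : ℕ) :
    Set.InjOn (toLatticePoint q) {p | hstarWeight q p.1 + ∑ i, p.2 i = t} := by
  rintro ⟨B, a⟩ hp ⟨B', a'⟩ hp' heq
  have hB := sub_sum_toLatticePoint q hp
  rw [heq, sub_sum_toLatticePoint q hp', Nat.cast_inj] at hB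
  subst hB
  refine Prod.ext rfl (funext fun j => ?_)
  simpa [toLatticePoint] using congrFun heq j

lemma ehrhartSeries_deltaOneQ :
    ehrhartSeries (deltaOneQ q) =
      countingSeries fun p : ℕ × (Fin d → ℕ) => hstarWeight q p.1 + ∑ i, p.2 i := by
  ext t
  rw [ehrhartSeries, coeff_mk, coeff_countingSeries, latticePoints_smul_deltaOneQ_eq_image,
    (injOn_toLatticePoint q t).ncard_image]

end latticePoints

theorem one_sub_X_pow_mul_ehrhartSeries_deltaOneQ {d : ℕ} (q : Fin d → ℕ) :
    (1 - X) ^ (d + 1) * ehrhartSeries (deltaOneQ q) =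
      ∑ b ∈ range (normalizedVolume q), X ^ hstarWeight q b := by
  rw [ehrhartSeries_deltaOneQ, countingSeries_add (finite_setOf_hstarWeight_eq q)
    (finite_setOf_sum_eq d), countingSeries_hstarWeight, countingSeries_sum]
  calc (1 - X : PowerSeries ℤ) ^ (d + 1) *
        ((mk 1 * ∑ b ∈ range (normalizedVolume q), X ^ hstarWeight q b) * mk 1 ^ d)
      = (mk 1 * (1 - X)) ^ (d + 1) * ∑ b ∈ range (normalizedVolume q), X ^ hstarWeight q b := by
        rw [mul_pow]
        ring
    _ = _ := by rw [mk_one_mul_one_sub_eq_one, one_pow, one_mul]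

lemma sum_range_mul_eq_sum_sum {M : Type*} [AddCommMonoid M] (f : ℕ → M) (k m : ℕ) :
    ∑ b ∈ range (k * m), f b = ∑ j ∈ range m, ∑ i ∈ range k, f (k * j + i) := by
  induction m with
  | zero => simp
  | succ m ih => rw [Nat.mul_succ, sum_range_add, ih, sum_range_succ]

def qnat (n k : ℕ) : ℕ :=
  if k < 2 * n - 1 then 1
  else if k = 2 * n - 1 then 3 * n
  else if k = 2 * n then 10 * n
  else 15 * n

section qnat

variable {n : ℕ}

lemma natCast_qnat (i : Fin (2 * n + 2)) : (qnat n i : ℤ) = qvec n i := by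
  unfold qnat qvec
  split_ifs <;> push_cast <;> rfl

lemma deltaQ_eq_deltaOneQ : deltaQ n = deltaOneQ fun i => qnat n i := by
  simp only [deltaQ, deltaOneQ, ← natCast_qnat, Int.cast_natCast]

lemma sum_qnat {M : Type*} [AddCommMonoid M] (hn : 1 ≤ n) (G : ℕ → M) :
    ∑ i : Fin (2 * n + 2), G (qnat n i) =
      (2 * n - 1) • G 1 + G (3 * n) + G (10 * n) + G (15 * n) := by
  rw [Fin.sum_univ_eq_sum_range (fun k => G (qnat n k)),
    show 2 * n + 2 = 2 * n - 1 + 1 + 1 + 1 by omega, sum_range_succ, sum_range_succ, sum_range_succ,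
    sum_congr rfl fun k hk => by rw [qnat, if_pos (mem_range.1 hk)], sum_const, card_range]
  have h₁ : qnat n (2 * n - 1) = 3 * n := by rw [qnat, if_neg (by omega), if_pos rfl]
  have h₂ : qnat n (2 * n - 1 + 1) = 10 * n := by
    rw [qnat, if_neg (by omega), if_neg (by omega), if_pos (by omega)]
  have h₃ : qnat n (2 * n - 1 + 2) = 15 * n := by
    rw [qnat, if_neg (by omega), if_neg (by omega), if_neg (by omega)]
  rw [h₁, h₂, h₃]

lemma normalizedVolume_qnat (hn : 1 ≤ n) :
    normalizedVolume (fun i : Fin (2 * n + 2) => qnat n i) = 30 * n := by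
  rw [normalizedVolume, show ∑ i : Fin (2 * n + 2), qnat n i = _ from sum_qnat hn id, smul_eq_mul]
  dsimp only [id]
  omega

lemma hstarWeight_qnat (hn : 1 ≤ n) (b : ℕ) :
    hstarWeight (fun i : Fin (2 * n + 2) => qnat n i) b =
      b - ((2 * n - 1) * (b / (30 * n)) + b / 10 + b / 3 + b / 2) := by
  have hdiv : ∀ c, b * (c * n) / (30 * n) = b * c / 30 := fun c => by
    rw [← mul_assoc, Nat.mul_div_mul_right _ _ hn]
  rw [hstarWeight, normalizedVolume_qnat hn, sum_qnat hn fun k => b * k / (30 * n),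
    hdiv, hdiv, hdiv, mul_one, smul_eq_mul]
  omega

lemma hstarWeight_qnat_thirty_mul_add {j b : ℕ} (hj : j < n) (hb : b < 30) :
    hstarWeight (fun i : Fin (2 * n + 2) => qnat n i) (30 * j + b) =
      2 * j + (b - b / 10 - b / 3 - b / 2) := by
  rw [hstarWeight_qnat (by omega), Nat.div_eq_of_lt (by omega : 30 * j + b < 30 * n)]
  omega

lemma sum_range_thirty_X_pow :
    ∑ b ∈ range 30, (X : PowerSeries ℤ) ^ (b - b / 10 - b / 3 - b / 2) =
      1 + 7 * X + 14 * X ^ 2 + 7 * X ^ 3 + X ^ 4 := by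
  simp only [sum_range_succ, sum_range_zero, Nat.reduceDiv, Nat.reduceSub]
  ring

lemma sum_X_pow_hstarWeight_qnat (hn : 1 ≤ n) :
    ∑ b ∈ range (normalizedVolume fun i : Fin (2 * n + 2) => qnat n i),
        X ^ hstarWeight (fun i : Fin (2 * n + 2) => qnat n i) b =
      (∑ j ∈ range n, (X : PowerSeries ℤ) ^ (2 * j)) *
        (1 + 7 * X + 14 * X ^ 2 + 7 * X ^ 3 + X ^ 4) := by
  rw [normalizedVolume_qnat hn, sum_range_mul_eq_sum_sum, ← sum_range_thirty_X_pow, sum_mul]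
  refine sum_congr rfl fun j hj => ?_
  rw [mul_sum]
  refine sum_congr rfl fun b hb => ?_
  rw [hstarWeight_qnat_thirty_mul_add (mem_range.1 hj) (mem_range.1 hb), pow_add]

end qnat

theorem stmt5 (n : ℕ) (hn : 2 ≤ n) :
    (1 - PowerSeries.X : PowerSeries ℤ) ^ (2 * n + 3) * ehrhartSeries (deltaQ n) =
      (∑ i ∈ Finset.range n, (PowerSeries.X : PowerSeries ℤ) ^ (2 * i)) *
        (1 + 7 * PowerSeries.X + 14 * PowerSeries.X ^ 2 + 7 * PowerSeries.X ^ 3 +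
          PowerSeries.X ^ 4) := by
  rw [deltaQ_eq_deltaOneQ, one_sub_X_pow_mul_ehrhartSeries_deltaOneQ,
    sum_X_pow_hstarWeight_qnat (by omega)]
end
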